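/- Let f = θ_{m,0} + Σ_{i=1}^{ℓ} a_i θ_{m,i} and g = θ_{m,0} + Σ_{j=1}^{ℓ} b_j θ_{m,j} with a_i, b_j ∈ F_2, and set a_0 = b_0 = 1. Then f ∘ g = Σ_{i=0}^{ℓ} Σ_{j=0}^{ℓ} a_i b_j θ_{m,i+j}, where θ_{m,s} denotes the zero map for s > ℓ; equivalently, f ∘ g = θ_{m,0} + Σ_{t=1}^{ℓ} c_t θ_{m,t} with c_t = Σ_{i+j=t, 0≤i,j} a_i b_j computed in F_2. In particular, f ∘ g ∈ G_{n,m}, so G_{n,m} is closed under composition and forms a monoid with neutral element θ_{m,0}. -/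

import Mathlib

/-- Index `i + j` computed modulo `n`, for `i : Fin n` and `j : ℕ`. -/
def idx {n : ℕ} (i : Fin n) (j : ℕ) : Fin n :=
  ⟨(i.val + j) % n, Nat.mod_lt _ i.pos⟩

/-- The map `θ_{m,k} : F_2^n → F_2^n`; `θ_{m,0}` is the identity map, and for `k ≥ 1`,
`(θ_{m,k}(x))_i = x_{i+mk} · ∏_{1 ≤ j ≤ mk−1, m ∤ j} (x_{i+j} + 1)` (indices mod `n`). -/
def theta (n m k : ℕ) : (Fin n → ZMod 2) → Fin n → ZMod 2 :=
  if k = 0 then id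
  else fun x i =>
    x (idx i (m * k)) *
      ∏ j ∈ (Finset.Ico 1 (m * k)).filter (fun j => ¬ m ∣ j), (x (idx i j) + 1)

/-- The set `G_{n,m}` of maps `θ_{m,0} + Σ_{k=1}^{⌊n/m⌋} a_k • θ_{m,k}` with `a_k ∈ F_2`. -/
def Gset (n m : ℕ) : Set ((Fin n → ZMod 2) → Fin n → ZMod 2) :=
  { F | ∃ a : ℕ → ZMod 2,
      F = theta n m 0 + ∑ k ∈ Finset.Icc 1 (n / m), a k • theta n m k }

/-! Over `𝔽₂`, `θ_k(x)_i = 1` exactly when `x` has a `1` at offset `mk` from `i` and `0`s at all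
offsets in `(0, mk)` not divisible by `m`. Peeling off the first block gives
`θ_{a+1}(x)_i = ∏_{0<j<m} (x_{i+j} + 1) · θ_a(x)_{i+m}`, so `θ_a ∘ g = Σ_k b_k θ_{a+k}` follows by
induction on `a`, once one knows that in front of `θ_s(x)_{i+m}` the coordinates `y_{i+j}`
(`0 < j < m`) of `y = g(x)` may be replaced by `x_{i+j}`. That holds because
`θ_k(x)_p · θ_s(x)_{p+d} = 0` whenever `0 < d < mk` and `m ∤ d`: the `1` demanded by one factor
falls on a `0` demanded by the other. Finally `θ_s = 0` once `ms > n`, because `m ∤ n` makes the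
offset `ms` wrap around onto the gap `ms - n`; so the terms `θ_{i+j}` with `i + j > ⌊n/m⌋` drop
out and the coefficients of `f ∘ g` are the truncated convolution of those of `f` and `g`. -/

open Finset

theorem Finset.mul_prod_congr_of_mul_eq {ι M : Type*} [CommMonoid M] {s : Finset ι} {c : M}
    {f g : ι → M} (h : ∀ j ∈ s, c * f j = c * g j) : c * ∏ j ∈ s, f j = c * ∏ j ∈ s, g j := by
  classical
  induction s using Finset.induction_on with
  | empty => rfl
  | insert a s ha ih =>
    rw [prod_insert ha, prod_insert ha, ← mul_assoc, h a (mem_insert_self a s), mul_right_comm,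
      ih fun j hj => h j (mem_insert_of_mem hj), mul_right_comm, mul_assoc]

theorem mul_prod_add_one_eq_zero_of_mem {ι : Type*} {s : Finset ι} {j : ι} (hj : j ∈ s)
    (f : ι → ZMod 2) : f j * ∏ t ∈ s, (f t + 1) = 0 := by
  classical
  have hz : ∀ z : ZMod 2, z * (z + 1) = 0 := by decide
  rw [← mul_prod_erase s _ hj, ← mul_assoc, hz, zero_mul]

section idx

variable {n : ℕ} (i : Fin n)

theorem idx_zero : idx i 0 = i :=
  Fin.ext (Nat.mod_eq_of_lt (by simp [i.isLt]))

theorem idx_idx (s t : ℕ) : idx (idx i s) t = idx i (s + t) :=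
  Fin.ext <| by simp only [idx, Nat.mod_add_mod, Nat.add_assoc]

theorem idx_add_self (j : ℕ) : idx i (j + n) = idx i j :=
  Fin.ext <| by simp only [idx, ← Nat.add_assoc, Nat.add_mod_right]

end idx

def thetaGaps (m k : ℕ) : Finset ℕ := (Ico 1 (m * k)).filter (fun j => ¬ m ∣ j)

theorem mem_thetaGaps {m k j : ℕ} : j ∈ thetaGaps m k ↔ 0 < j ∧ j < m * k ∧ ¬ m ∣ j := by
  simp [thetaGaps, and_assoc, Nat.one_le_iff_ne_zero, Nat.pos_iff_ne_zero]

theorem thetaGaps_succ (m k : ℕ) :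
    thetaGaps m (k + 1) = thetaGaps m 1 ∪ (thetaGaps m k).map (addLeftEmbedding m) := by
  ext j
  simp only [mem_union, mem_map, mem_thetaGaps, addLeftEmbedding_apply, mul_one, mul_add_one]
  constructor
  · rintro ⟨hj0, hjk, hmj⟩
    rcases lt_or_gt_of_ne (fun h : j = m => hmj (h ▸ dvd_refl m)) with hjm | hjm
    · exact Or.inl ⟨hj0, hjm, hmj⟩
    · refine Or.inr ⟨j - m, ⟨by omega, by omega, fun h => hmj ?_⟩, by omega⟩
      simpa [Nat.add_sub_cancel' hjm.le] using Nat.dvd_add (dvd_refl m) h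
  · rintro (⟨hj0, hjm, hmj⟩ | ⟨t, ⟨ht0, htk, hmt⟩, rfl⟩)
    · exact ⟨hj0, by omega, hmj⟩
    · exact ⟨by omega, by omega, fun h => hmt ((Nat.dvd_add_right (dvd_refl m)).1 h)⟩

theorem prod_thetaGaps_succ {M : Type*} [CommMonoid M] (m k : ℕ) (f : ℕ → M) :
    ∏ j ∈ thetaGaps m (k + 1), f j =
      (∏ j ∈ thetaGaps m 1, f j) * ∏ j ∈ thetaGaps m k, f (m + j) := by
  rw [thetaGaps_succ, prod_union, prod_map]
  · rfl
  · refine disjoint_left.2 fun j hj hj' => ?_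
    obtain ⟨t, -, rfl⟩ := mem_map.1 hj'
    have := (mem_thetaGaps.1 hj).2.1
    simp at this

section theta

variable {n m : ℕ} (x : Fin n → ZMod 2)

theorem theta_zero : theta n m 0 = id := if_pos rfl

theorem theta_apply (k : ℕ) (i : Fin n) :
    theta n m k x i = x (idx i (m * k)) * ∏ j ∈ thetaGaps m k, (x (idx i j) + 1) := by
  rcases eq_or_ne k 0 with rfl | hk
  · simp [theta_zero, idx_zero, thetaGaps]
  · rw [theta, if_neg hk]; rfl

theorem theta_succ_apply (k : ℕ) (i : Fin n) :
    theta n m (k + 1) x i =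
      (∏ j ∈ thetaGaps m 1, (x (idx i j) + 1)) * theta n m k x (idx i m) := by
  rw [theta_apply, theta_apply, prod_thetaGaps_succ]
  simp only [idx_idx, mul_add_one, add_comm (m * k) m]
  ring

theorem theta_mul_apply_eq_zero {k j : ℕ} (hj : j ∈ thetaGaps m k) (i : Fin n) :
    theta n m k x i * x (idx i j) = 0 := by
  rw [theta_apply, mul_assoc, mul_comm _ (x (idx i j))]
  exact mul_eq_zero_of_right _ (mul_prod_add_one_eq_zero_of_mem hj fun t => x (idx i t))

theorem theta_mul_theta_eq_zero {k d : ℕ} (hd : d ∈ thetaGaps m k) (s : ℕ) (i : Fin n) :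
    theta n m k x i * theta n m s x (idx i d) = 0 := by
  obtain ⟨hd0, hdk, hmd⟩ := mem_thetaGaps.1 hd
  rcases lt_or_gt_of_ne (fun h : d + m * s = m * k =>
      hmd ((Nat.dvd_add_left (dvd_mul_right m s)).1 (h ▸ dvd_mul_right m k))) with hlt | hgt
  · have hgap : d + m * s ∈ thetaGaps m k :=
      mem_thetaGaps.2 ⟨by omega, hlt, fun h => hmd ((Nat.dvd_add_left (dvd_mul_right m s)).1 h)⟩
    rw [theta_apply x s, idx_idx, ← mul_assoc, theta_mul_apply_eq_zero x hgap, zero_mul]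
  · have hgap : m * k - d ∈ thetaGaps m s := by
      refine mem_thetaGaps.2 ⟨by omega, by omega, fun h => hmd ?_⟩
      simpa [Nat.sub_sub_self hdk.le] using Nat.dvd_sub (dvd_mul_right m k) h
    have hpos : idx (idx i d) (m * k - d) = idx i (m * k) := by rw [idx_idx]; congr 1; omega
    rw [theta_apply x k, ← hpos, mul_right_comm, mul_comm (x (idx (idx i d) (m * k - d))),
      theta_mul_apply_eq_zero x hgap, zero_mul]

theorem theta_eq_zero_of_lt (hmn : ¬ m ∣ n) {s : ℕ} (hs : n < m * s) : theta n m s = 0 := by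
  funext x i
  have hgap : m * s - n ∈ thetaGaps m s := by
    refine mem_thetaGaps.2 ⟨by omega, by have := i.pos; omega, fun h => hmn ?_⟩
    simpa [Nat.sub_sub_self hs.le] using Nat.dvd_sub (dvd_mul_right m s) h
  have hpos : idx i (m * s) = idx i (m * s - n) := by
    rw [← idx_add_self i (m * s - n), Nat.sub_add_cancel hs.le]
  rw [Pi.zero_apply, Pi.zero_apply, theta_apply, hpos]
  exact mul_prod_add_one_eq_zero_of_mem hgap fun t => x (idx i t)

end theta

section composition

variable {n m : ℕ} (x : Fin n → ZMod 2) {L : ℕ} {b : ℕ → ZMod 2}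

theorem sum_smul_theta_apply (s : Finset ℕ) (p : Fin n) :
    (∑ k ∈ s, b k • theta n m k) x p = ∑ k ∈ s, b k * theta n m k x p := by
  simp only [Finset.sum_apply, Pi.smul_apply, smul_eq_mul]

theorem theta_mul_sum_smul_theta_apply (hb0 : b 0 = 1) {j : ℕ} (hj : j ∈ thetaGaps m 1)
    (s : ℕ) (i : Fin n) :
    theta n m s x (idx i m) * (∑ k ∈ range (L + 1), b k • theta n m k) x (idx i j) =
      theta n m s x (idx i m) * x (idx i j) := by
  obtain ⟨hj0, hjm, hmj⟩ := mem_thetaGaps.1 hj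
  rw [mul_one] at hjm
  rw [sum_smul_theta_apply, mul_sum, sum_eq_single 0]
  · rw [hb0, theta_zero, one_mul, id]
  · intro k _ hk
    have hgap : m - j ∈ thetaGaps m k := by
      refine mem_thetaGaps.2 ⟨by omega, ?_, fun h => hmj ?_⟩
      · have := Nat.le_mul_of_pos_right m (Nat.pos_of_ne_zero hk); omega
      · simpa [Nat.sub_sub_self hjm.le] using Nat.dvd_sub (dvd_refl m) h
    have hpos : idx (idx i j) (m - j) = idx i m := by rw [idx_idx, Nat.add_sub_cancel' hjm.le]
    rw [← hpos]
    linear_combination b k * theta_mul_theta_eq_zero x hgap s (idx i j)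
  · simp

theorem prod_thetaGaps_sum_smul_theta_mul_theta (hb0 : b 0 = 1) (s : ℕ) (i : Fin n) :
    (∏ j ∈ thetaGaps m 1, ((∑ k ∈ range (L + 1), b k • theta n m k) x (idx i j) + 1)) *
        theta n m s x (idx i m) =
      (∏ j ∈ thetaGaps m 1, (x (idx i j) + 1)) * theta n m s x (idx i m) := by
  rw [mul_comm, mul_prod_congr_of_mul_eq fun j hj => ?_, mul_comm]
  rw [mul_add_one, mul_add_one, theta_mul_sum_smul_theta_apply x hb0 hj]

theorem theta_sum_smul_theta_apply (hb0 : b 0 = 1) (a : ℕ) (i : Fin n) :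
    theta n m a ((∑ k ∈ range (L + 1), b k • theta n m k) x) i =
      ∑ k ∈ range (L + 1), b k * theta n m (a + k) x i := by
  induction a generalizing i with
  | zero => simp only [theta_zero, zero_add, id, sum_smul_theta_apply]
  | succ a ih =>
    rw [theta_succ_apply, ih, mul_sum]
    refine sum_congr rfl fun k _ => ?_
    rw [mul_left_comm, prod_thetaGaps_sum_smul_theta_mul_theta x hb0, ← theta_succ_apply,
      Nat.add_right_comm]

theorem sum_smul_theta_comp (s : Finset ℕ) (a : ℕ → ZMod 2) (hb0 : b 0 = 1) :
    (∑ i ∈ s, a i • theta n m i) ∘ (∑ j ∈ range (L + 1), b j • theta n m j) =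
      ∑ i ∈ s, ∑ j ∈ range (L + 1), (a i * b j) • theta n m (i + j) := by
  funext x p
  rw [Function.comp_apply, sum_smul_theta_apply]
  simp only [theta_sum_smul_theta_apply x hb0]
  simp only [Finset.sum_apply, Pi.smul_apply, smul_eq_mul, mul_sum, mul_assoc]

end composition

section Gset

variable {n m : ℕ}

theorem theta_eq_zero_of_div_lt (hm : 0 < m) (hmn : ¬ m ∣ n) {s : ℕ} (hs : n / m < s) :
    theta n m s = 0 :=
  theta_eq_zero_of_lt hmn <| by rw [mul_comm]; exact (Nat.div_lt_iff_lt_mul hm).1 hs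

theorem sum_range_smul_theta_eq {a : ℕ → ZMod 2} (ha0 : a 0 = 1) (L : ℕ) :
    ∑ k ∈ range (L + 1), a k • theta n m k = theta n m 0 + ∑ k ∈ Icc 1 L, a k • theta n m k := by
  rw [Nat.range_succ_eq_Icc_zero, ← insert_Icc_add_one_left_eq_Icc L.zero_le,
    sum_insert (by simp), ha0, one_smul, zero_add]

theorem mem_Gset_iff {F : (Fin n → ZMod 2) → Fin n → ZMod 2} :
    F ∈ Gset n m ↔
      ∃ a : ℕ → ZMod 2, a 0 = 1 ∧ F = ∑ k ∈ range (n / m + 1), a k • theta n m k := by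
  constructor
  · rintro ⟨a, rfl⟩
    refine ⟨Function.update a 0 1, by simp, ?_⟩
    rw [sum_range_smul_theta_eq (by simp)]
    refine congrArg _ (sum_congr rfl fun k hk => ?_)
    rw [Function.update_of_ne (by simp at hk; omega)]
  · rintro ⟨a, ha0, rfl⟩
    exact ⟨a, sum_range_smul_theta_eq ha0 _⟩

theorem sum_sum_smul_theta_add (hm : 0 < m) (hmn : ¬ m ∣ n) (a b : ℕ → ZMod 2) :
    ∑ i ∈ range (n / m + 1), ∑ j ∈ range (n / m + 1), (a i * b j) • theta n m (i + j) =
      ∑ t ∈ range (n / m + 1), (∑ p ∈ antidiagonal t, a p.1 * b p.2) • theta n m t := by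
  have hcoeff : ∀ t, (∑ p ∈ antidiagonal t, a p.1 * b p.2) • theta n m t =
      ∑ k ∈ range (t + 1), (a k * b (t - k)) • theta n m (k + (t - k)) := fun t => by
    rw [sum_smul, Nat.sum_antidiagonal_eq_sum_range_succ fun i j => (a i * b j) • theta n m t]
    exact sum_congr rfl fun k hk => by
      rw [Nat.add_sub_cancel' (by simpa [Nat.lt_succ_iff] using hk)]
  rw [sum_congr rfl fun t _ => hcoeff t,
    sum_range_diag_flip _ fun i j => (a i * b j) • theta n m (i + j)]
  refine sum_congr rfl fun i hi => (sum_subset (range_subset_range.2 (Nat.sub_le _ _)) ?_).symm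
  intro j _ hj
  simp only [mem_range] at hi hj
  rw [theta_eq_zero_of_div_lt hm hmn (show n / m < i + j by omega), smul_zero]

end Gset

theorem stmt5_general (n m : ℕ) (hm : 2 ≤ m) (hmn : ¬ m ∣ n)
    (a b : ℕ → ZMod 2) (hb0 : b 0 = 1) :
    ((∑ i ∈ Finset.range (n / m + 1), a i • theta n m i) ∘
        (∑ j ∈ Finset.range (n / m + 1), b j • theta n m j)) =
      (∑ i ∈ Finset.range (n / m + 1), ∑ j ∈ Finset.range (n / m + 1),
        (a i * b j) • theta n m (i + j)) ∧
    (∀ f ∈ Gset n m, ∀ g ∈ Gset n m, f ∘ g ∈ Gset n m) ∧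
    theta n m 0 ∈ Gset n m ∧
    (∀ f ∈ Gset n m, f ∘ theta n m 0 = f ∧ theta n m 0 ∘ f = f) := by
  refine ⟨sum_smul_theta_comp _ a hb0, ?_, ⟨0, by simp⟩, fun f _ => by simp [theta_zero]⟩
  intro f hf g hg
  obtain ⟨c, hc0, rfl⟩ := mem_Gset_iff.1 hf
  obtain ⟨d, hd0, rfl⟩ := mem_Gset_iff.1 hg
  rw [sum_smul_theta_comp _ c hd0, sum_sum_smul_theta_add (by omega) hmn]
  exact mem_Gset_iff.2 ⟨_, by simp [hc0, hd0], rfl⟩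

theorem stmt5 (n m : ℕ) (hn : 1 ≤ n) (hm : 2 ≤ m) (hmn : ¬ m ∣ n)
    (a b : ℕ → ZMod 2) (ha0 : a 0 = 1) (hb0 : b 0 = 1) :
    ((∑ i ∈ Finset.range (n / m + 1), a i • theta n m i) ∘
        (∑ j ∈ Finset.range (n / m + 1), b j • theta n m j)) =
      (∑ i ∈ Finset.range (n / m + 1), ∑ j ∈ Finset.range (n / m + 1),
        (a i * b j) • theta n m (i + j)) ∧
    (∀ f ∈ Gset n m, ∀ g ∈ Gset n m, f ∘ g ∈ Gset n m) ∧
    theta n m 0 ∈ Gset n m ∧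
    (∀ f ∈ Gset n m, f ∘ theta n m 0 = f ∧ theta n m 0 ∘ f = f) :=
  stmt5_general n m hm hmn a b hb0
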